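/- Let A be an abelian category with enough projectives. The assignments T ↦ ({X ∈ ⊥₁T : pd X ≤ 1}, Fac T, T⊥) and (C, T, F) ↦ C ∩ T are mutually inverse bijections between tilting subcategories of A and cotorsion torsion triples in A. -/

import Mathlib

/-!
The key facts, all proved with pullbacks and pushouts of short exact sequences, are:

* if `pd X ≤ 1` then `Ext¹(X, -)` is right exact, so `Ext¹(T, Fac T) = 0`;
* pushing the coresolution `P ↪ T₀ ↠ T₁` of a projective `P ↠ K` along `P ↠ K` embeds
  `K` into an object of `Fac T` with cokernel in `T`; this yields both approximation sequences
  of the cotorsion pair `(⊥₁T ∩ {pd ≤ 1}, Fac T)`;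
* for a right `T`-approximation `T_E → E`, its image is the torsion part of `E` and its cokernel
  lies in `T^⊥`; an object `F₀ ∈ T^⊥` with `Ext¹(T, F₀) = 0` is zero, since any `P ↠ F₀` with `P`
  projective factors through `P ↪ T₀`.

Conversely, for a cotorsion torsion triple `(C, T, F)`, `T` is closed under quotients, so an
extension of a syzygy `K` of `X ∈ C` embeds in an object of `T` with cokernel in `T`, and
`Ext¹(X, T) = 0` lifts the classifying map; hence `pd X ≤ 1`. A `C`-cover of the torsion part of
`E` is a right `C ∩ T`-approximation of `E`, and `C`-covers of objects of `T` lie in `C ∩ T`, so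
`T = Fac (C ∩ T)`.
-/

open CategoryTheory Category Limits

attribute [local instance] CategoryTheory.Abelian.hasFiniteBiproducts
attribute [local instance] CategoryTheory.Limits.HasFiniteBiproducts.of_hasFiniteProducts

universe w v u

namespace Paper

variable {A : Type u} [Category.{v} A] [Abelian A]

/-- `IsSes i p` expresses that `0 ⟶ X ⟶ Y ⟶ Z ⟶ 0` is a short exact sequence. -/
def IsSes {X Y Z : A} (i : X ⟶ Y) (p : Y ⟶ Z) : Prop :=
  ∃ w : i ≫ p = 0, (ShortComplex.mk i p w).ShortExact

/-- `Ext¹(X, Y) = 0`, phrased as: every extension of `X` by `Y` splits. -/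
def Ext1Zero (X Y : A) : Prop :=
  ∀ ⦃E : A⦄ (i : Y ⟶ E) (p : E ⟶ X), IsSes i p → ∃ s : X ⟶ E, s ≫ p = 𝟙 X

/-- A torsion pair `(T, F)` of (strictly full) subcategories of an abelian category. -/
structure IsTorsionPair (T F : Set A) : Prop where
  isoClosed_torsion : ∀ {X Y : A}, (X ≅ Y) → X ∈ T → Y ∈ T
  isoClosed_torsionFree : ∀ {X Y : A}, (X ≅ Y) → X ∈ F → Y ∈ F
  hom_zero : ∀ {X Y : A}, X ∈ T → Y ∈ F → ∀ f : X ⟶ Y, f = 0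
  seq : ∀ X : A, ∃ (tX fX : A) (i : tX ⟶ X) (p : X ⟶ fX), tX ∈ T ∧ fX ∈ F ∧ IsSes i p

/-- A (complete) cotorsion pair `(C, D)` in an abelian category. -/
structure IsCotorsionPair (C D : Set A) : Prop where
  left_eq : C = {X : A | ∀ Y ∈ D, Ext1Zero X Y}
  right_eq : D = {Y : A | ∀ X ∈ C, Ext1Zero X Y}
  seq₁ : ∀ X : A, ∃ (dX cX : A) (i : dX ⟶ cX) (p : cX ⟶ X), dX ∈ D ∧ cX ∈ C ∧ IsSes i p
  seq₂ : ∀ X : A, ∃ (dX cX : A) (i : X ⟶ dX) (p : dX ⟶ cX), dX ∈ D ∧ cX ∈ C ∧ IsSes i p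

/-- `f` factors through some object belonging to the class `P`. -/
def FactorsThroughClass (P : Set A) {X Y : A} (f : X ⟶ Y) : Prop :=
  ∃ (Z : A) (_ : Z ∈ P) (a : X ⟶ Z) (b : Z ⟶ Y), a ≫ b = f

/-- The hom-relation on the full subcategory on `S` identifying two morphisms whose
difference factors through an object of `P`. -/
def quotRel (S P : Set A) : HomRel (ObjectProperty.FullSubcategory (· ∈ S)) :=
  fun {X Y} f g =>
    FactorsThroughClass P ((show X.obj ⟶ Y.obj from f.hom) - (show X.obj ⟶ Y.obj from g.hom))

/-- The additive quotient of the full subcategory on `S` by the morphisms factoring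
through objects of `P`. -/
abbrev AddQuot (S P : Set A) := CategoryTheory.Quotient (quotRel S P)

/-- The subcategory of quotients of (finite direct sums of) objects of `T`. -/
def Fac (T : Set A) : Set A := {X : A | ∃ Y ∈ T, ∃ p : Y ⟶ X, Epi p}

/-- The right `Hom`-orthogonal `T^⊥`. -/
def rightHomPerp (T : Set A) : Set A := {X : A | ∀ Y ∈ T, ∀ f : Y ⟶ X, f = 0}

/-- The left `Hom`-orthogonal `^⊥F`. -/
def leftHomPerp (F : Set A) : Set A := {X : A | ∀ Y ∈ F, ∀ f : X ⟶ Y, f = 0}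

/-- The right `Ext¹`-orthogonal `T^{⊥₁}`. -/
def rightExt1Perp (T : Set A) : Set A := {X : A | ∀ Y ∈ T, Ext1Zero Y X}

/-- The left `Ext¹`-orthogonal `^{⊥₁}D`. -/
def leftExt1Perp (D : Set A) : Set A := {X : A | ∀ Y ∈ D, Ext1Zero X Y}

/-- `X` has projective dimension at most one: it has a length-one projective resolution. -/
def PdLeOne (X : A) : Prop :=
  ∃ (P₁ P₀ : A) (i : P₁ ⟶ P₀) (p : P₀ ⟶ X), Projective P₁ ∧ Projective P₀ ∧ IsSes i p

/-- A weak tilting subcategory of an abelian category with enough projectives. -/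
structure IsWeakTilting (T : Set A) : Prop where
  sum_mem : ∀ {X Y : A}, X ∈ T → Y ∈ T → (X ⊞ Y) ∈ T
  summand_mem : ∀ {X Y : A}, X ∈ T → (∃ (s : Y ⟶ X) (r : X ⟶ Y), s ≫ r = 𝟙 Y) → Y ∈ T
  ext1_zero : ∀ {X Y : A}, X ∈ T → Y ∈ T → Ext1Zero X Y
  pd_le_one : ∀ X ∈ T, PdLeOne X
  coresolution : ∀ P : A, Projective P → ∃ (T₀ T₁ : A) (i : P ⟶ T₀) (p : T₀ ⟶ T₁),
    T₀ ∈ T ∧ T₁ ∈ T ∧ IsSes i p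

/-- `φ : X ⟶ E` is a right `T`-approximation of `E`. -/
def IsRightApprox (T : Set A) {X E : A} (φ : X ⟶ E) : Prop :=
  X ∈ T ∧ ∀ X' ∈ T, ∀ f : X' ⟶ E, ∃ g : X' ⟶ X, g ≫ φ = f

/-- A tilting subcategory: a weak tilting subcategory that is contravariantly finite. -/
structure IsTilting (T : Set A) extends IsWeakTilting T : Prop where
  contravariantly_finite : ∀ E : A, ∃ (X : A) (φ : X ⟶ E), IsRightApprox T φ

namespace IsSes

variable {X Y Z : A} {i : X ⟶ Y} {p : Y ⟶ Z}

lemma w (h : IsSes i p) : i ≫ p = 0 := h.1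

lemma mono (h : IsSes i p) : Mono i := h.2.mono_f

lemma epi (h : IsSes i p) : Epi p := h.2.epi_g

lemma exists_lift (h : IsSes i p) {W : A} (k : W ⟶ Y) (hk : k ≫ p = 0) :
    ∃ l : W ⟶ X, l ≫ i = k :=
  have := h.mono
  h.2.exact.lift' k hk

lemma exists_desc (h : IsSes i p) {W : A} (k : Y ⟶ W) (hk : i ≫ k = 0) :
    ∃ l : Z ⟶ W, p ≫ l = k :=
  have := h.epi
  h.2.exact.desc' k hk

lemma of_lift [Mono i] [Epi p] (hw : i ≫ p = 0)
    (hlift : ∀ {W : A} (k : W ⟶ Y), k ≫ p = 0 → ∃ l : W ⟶ X, l ≫ i = k) : IsSes i p :=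
  ⟨hw, .mk' (ShortComplex.exact_of_f_is_kernel _
    (KernelFork.IsLimit.ofι' i hw fun k hk => ⟨_, (hlift k hk).choose_spec⟩)) ‹_› ‹_›⟩

lemma of_desc [Mono i] [Epi p] (hw : i ≫ p = 0)
    (hdesc : ∀ {W : A} (k : Y ⟶ W), i ≫ k = 0 → ∃ l : Z ⟶ W, p ≫ l = k) : IsSes i p :=
  ⟨hw, .mk' (ShortComplex.exact_of_g_is_cokernel _
    (CokernelCofork.IsColimit.ofπ' p hw fun k hk => ⟨_, (hdesc k hk).choose_spec⟩)) ‹_› ‹_›⟩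

lemma exists_section_of_retraction (h : IsSes i p) {r : Y ⟶ X} (hr : i ≫ r = 𝟙 X) :
    ∃ s : Z ⟶ Y, s ≫ p = 𝟙 Z :=
  ⟨_, (ShortComplex.Splitting.ofExactOfRetraction _ h.2.exact r hr h.epi).s_g⟩

lemma exists_retraction_of_section (h : IsSes i p) {s : Z ⟶ Y} (hs : s ≫ p = 𝟙 Z) :
    ∃ r : Y ⟶ X, i ≫ r = 𝟙 X :=
  ⟨_, (ShortComplex.Splitting.ofExactOfSection _ h.2.exact s hs h.mono).f_r⟩

lemma isIso_of_isZero_right (h : IsSes i p) (hZ : IsZero Z) : IsIso i :=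
  have := h.mono
  have : Epi i := h.2.exact.epi_f (hZ.eq_of_tgt _ _)
  isIso_of_mono_of_epi i

lemma isIso_of_isZero_left (h : IsSes i p) (hX : IsZero X) : IsIso p :=
  have := h.epi
  have : Mono p := h.2.exact.mono_g (hX.eq_of_src _ _)
  isIso_of_mono_of_epi p

end IsSes

lemma isSes_kernel {Y Z : A} (p : Y ⟶ Z) [Epi p] : IsSes (kernel.ι p) p :=
  .of_lift (kernel.condition p) fun k hk => ⟨kernel.lift p k hk, kernel.lift_ι p k hk⟩

lemma isSes_cokernel {X Y : A} (i : X ⟶ Y) [Mono i] : IsSes i (cokernel.π i) :=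
  .of_desc (cokernel.condition i) fun k hk => ⟨cokernel.desc i k hk, cokernel.π_desc i k hk⟩

lemma isSes_biprod (X Y : A) : IsSes (biprod.inl : X ⟶ X ⊞ Y) biprod.snd :=
  .of_desc (by simp) fun k hk => ⟨biprod.inr ≫ k, by ext <;> simp [hk]⟩

namespace IsSes

variable {X Y Z : A} {i : X ⟶ Y} {p : Y ⟶ Z}

lemma pullback_snd (h : IsSes i p) {Z' : A} (f : Z' ⟶ Z) :
    IsSes (pullback.lift i 0 (by simp [h.w]) : X ⟶ pullback p f) (pullback.snd p f) := by
  have := h.mono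
  have := h.epi
  have : Mono (pullback.lift i 0 (by simp [h.w]) : X ⟶ pullback p f) :=
    mono_of_mono_fac (pullback.lift_fst _ _ _)
  refine .of_lift (pullback.lift_snd _ _ _) fun k hk => ?_
  obtain ⟨l, hl⟩ := h.exists_lift (k ≫ pullback.fst p f) (by simp [pullback.condition, reassoc_of% hk])
  refine ⟨l, pullback.hom_ext ?_ ?_⟩
  · rw [assoc, pullback.lift_fst, hl]
  · rw [assoc, pullback.lift_snd, comp_zero, hk]

lemma pullback_fst {K Z' : A} {k : K ⟶ Z'} {f : Z' ⟶ Z} (hk : IsSes k f) (p : Y ⟶ Z) :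
    IsSes (pullback.lift 0 k (by simp [hk.w]) : K ⟶ pullback p f) (pullback.fst p f) := by
  have := hk.mono
  have := hk.epi
  have : Mono (pullback.lift 0 k (by simp [hk.w]) : K ⟶ pullback p f) :=
    mono_of_mono_fac (pullback.lift_snd _ _ _)
  refine .of_lift (pullback.lift_fst _ _ _) fun m hm => ?_
  obtain ⟨l, hl⟩ := hk.exists_lift (m ≫ pullback.snd p f)
    (by simp [← pullback.condition, reassoc_of% hm])
  refine ⟨l, pullback.hom_ext ?_ ?_⟩
  · rw [assoc, pullback.lift_fst, comp_zero, hm]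
  · rw [assoc, pullback.lift_snd, hl]

lemma pullback_fst_comp (h : IsSes i p) {Z' Z'' : A} {f : Z' ⟶ Z} {c : Z ⟶ Z''}
    (hf : IsSes f c) : IsSes (pullback.fst p f) (p ≫ c) := by
  have := h.epi
  have := hf.epi
  have := hf.mono
  refine .of_lift (by simp [pullback.condition_assoc, hf.w]) fun m hm => ?_
  obtain ⟨l, hl⟩ := hf.exists_lift (m ≫ p) (by simpa using hm)
  exact ⟨pullback.lift m l hl.symm, pullback.lift_fst _ _ _⟩

lemma pushout_inl (h : IsSes i p) {X' : A} (f : X ⟶ X') :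
    IsSes (pushout.inl f i) (pushout.desc 0 p (by simp [h.w]) : pushout f i ⟶ Z) := by
  have := h.mono
  have := h.epi
  have : Epi (pushout.desc 0 p (by simp [h.w]) : pushout f i ⟶ Z) :=
    epi_of_epi_fac (pushout.inr_desc _ _ _)
  refine .of_desc (pushout.inl_desc _ _ _) fun k hk => ?_
  obtain ⟨l, hl⟩ := h.exists_desc (pushout.inr f i ≫ k) (by simp [← pushout.condition_assoc, hk])
  refine ⟨l, pushout.hom_ext ?_ ?_⟩
  · rw [pushout.inl_desc_assoc, zero_comp, hk]
  · rw [pushout.inr_desc_assoc, hl]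

lemma pushout_inr {X' C : A} {f : X ⟶ X'} {g : X' ⟶ C} (hf : IsSes f g) (i : X ⟶ Y) :
    IsSes (pushout.inr f i) (pushout.desc g 0 (by simp [hf.w]) : pushout f i ⟶ C) := by
  have := hf.mono
  have := hf.epi
  have : Epi (pushout.desc g 0 (by simp [hf.w]) : pushout f i ⟶ C) :=
    epi_of_epi_fac (pushout.inl_desc _ _ _)
  refine .of_desc (pushout.inr_desc _ _ _) fun k hk => ?_
  obtain ⟨l, hl⟩ := hf.exists_desc (pushout.inl f i ≫ k) (by simp [pushout.condition_assoc, hk])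
  refine ⟨l, pushout.hom_ext ?_ ?_⟩
  · rw [pushout.inl_desc_assoc, hl]
  · rw [pushout.inr_desc_assoc, zero_comp, hk]

end IsSes

lemma ext1Zero_of_projective {X Y : A} [Projective X] : Ext1Zero X Y := fun _ _ p h =>
  have := h.epi
  ⟨Projective.factorThru (𝟙 X) p, Projective.factorThru_comp _ _⟩

namespace IsSes

variable {X Y Z : A} {i : X ⟶ Y} {p : Y ⟶ Z}

lemma exists_lift_of_ext1Zero (h : IsSes i p) {W : A} (he : Ext1Zero W X) (g : W ⟶ Z) :
    ∃ g' : W ⟶ Y, g' ≫ p = g := by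
  obtain ⟨s, hs⟩ := he _ _ (h.pullback_snd g)
  exact ⟨s ≫ pullback.fst p g, by rw [assoc, pullback.condition, reassoc_of% hs]⟩

lemma exists_extend_of_ext1Zero (h : IsSes i p) {W : A} (he : Ext1Zero Z W) (f : X ⟶ W) :
    ∃ f' : Y ⟶ W, i ≫ f' = f := by
  have hpo := h.pushout_inl f
  obtain ⟨s, hs⟩ := he _ _ hpo
  obtain ⟨r, hr⟩ := hpo.exists_retraction_of_section hs
  exact ⟨pushout.inr f i ≫ r, by rw [← pushout.condition_assoc, hr, comp_id]⟩

/-- A piece of the long exact sequence `Hom(W, Y) → Hom(W, Z) → Ext¹(W, X) → Ext¹(W, Y)`. -/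
lemma ext1Zero_left (h : IsSes i p) {W : A} (hY : Ext1Zero W Y)
    (hp : ∀ g : W ⟶ Z, ∃ g' : W ⟶ Y, g' ≫ p = g) : Ext1Zero W X := by
  intro E j q hE
  have hpo := hE.pushout_inl i
  have hpo' := h.pushout_inr j
  obtain ⟨σ, hσ⟩ := hY _ _ hpo
  obtain ⟨g', hg'⟩ := hp (σ ≫ pushout.desc p 0 (by simp [h.w]))
  set τ : W ⟶ pushout i j := σ - g' ≫ pushout.inl i j
  have hτq : τ ≫ pushout.desc 0 q (by simp [hE.w]) = 𝟙 W := by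
    rw [Preadditive.sub_comp, hσ, assoc, pushout.inl_desc, comp_zero, sub_zero]
  obtain ⟨τ', hτ'⟩ := hpo'.exists_lift τ (by
    rw [Preadditive.sub_comp, assoc, pushout.inl_desc, hg', sub_self])
  exact ⟨τ', by rw [← hτq, ← hτ', assoc, pushout.inr_desc]⟩

end IsSes

namespace Ext1Zero

lemma of_retract {X G Y : A} (h : Ext1Zero G Y) (s : X ⟶ G) (r : G ⟶ X) (hsr : s ≫ r = 𝟙 X) :
    Ext1Zero X Y := fun _ _ p hE => by
  obtain ⟨σ, hσ⟩ := h _ _ (hE.pullback_snd r)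
  exact ⟨s ≫ σ ≫ pullback.fst p r, by simp [pullback.condition, reassoc_of% hσ, hsr]⟩

lemma of_isSes {X' X X'' Y : A} {a : X' ⟶ X} {b : X ⟶ X''} (hs : IsSes a b)
    (h' : Ext1Zero X' Y) (h'' : Ext1Zero X'' Y) : Ext1Zero X Y := by
  intro E i p hE
  have hpb := hE.pullback_snd a
  obtain ⟨σ, hσ⟩ := h' _ _ hpb
  obtain ⟨r', hr'⟩ := hpb.exists_retraction_of_section hσ
  obtain ⟨r, hr⟩ := (hE.pullback_fst_comp hs).exists_extend_of_ext1Zero h'' r'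
  refine hE.exists_section_of_retraction (r := r) ?_
  rw [← hr', ← hr, ← assoc, pullback.lift_fst]

lemma of_epi_of_pdLeOne {X B C : A} (hX : PdLeOne X) (hB : Ext1Zero X B) (g : B ⟶ C) [Epi g] :
    Ext1Zero X C := by
  intro E iE pE hE
  obtain ⟨P₁, P₀, q, π, hP₁, hP₀, hres⟩ := hX
  have := hE.epi
  obtain ⟨h, hh⟩ := hP₀.factors π pE
  obtain ⟨f, hf⟩ := hE.exists_lift (q ≫ h) (by rw [assoc, hh, hres.w])
  obtain ⟨f', hf'⟩ := hP₁.factors f g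
  obtain ⟨σ, hσ⟩ := hB _ _ (hres.pushout_inl f')
  have hu : f' ≫ g ≫ iE = q ≫ h := by rw [reassoc_of% hf', hf]
  refine ⟨σ ≫ pushout.desc (g ≫ iE) h hu, ?_⟩
  rw [← hσ, assoc]
  congr 1
  apply pushout.hom_ext
  · rw [pushout.inl_desc_assoc, assoc, hE.w, comp_zero, pushout.inl_desc]
  · rw [pushout.inr_desc_assoc, hh, pushout.inr_desc]

end Ext1Zero

lemma projective_of_isSes {P₁ Q P₂ : A} {i : P₁ ⟶ Q} {p : Q ⟶ P₂} (h : IsSes i p)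
    [Projective P₁] [Projective P₂] : Projective Q :=
  have : Projective (ShortComplex.mk i p h.w).X₃ := ‹Projective P₂›
  Projective.of_iso (h.2.splittingOfProjective.isoBinaryBiproduct).symm inferInstance

lemma projective_of_ext1Zero [EnoughProjectives A] {K : A} (h : ∀ Z : A, Ext1Zero K Z) :
    Projective K := by
  obtain ⟨s, hs⟩ := h _ _ _ (isSes_kernel (Projective.π K))
  exact Retract.projective ⟨s, Projective.π K, hs⟩

namespace PdLeOne

/-- A form of Schanuel's lemma. -/
lemma projective_syzygy {G N Q : A} (hG : PdLeOne G) {n : N ⟶ Q} {q : Q ⟶ G} (h : IsSes n q)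
    [Projective Q] : Projective N := by
  obtain ⟨P₁, P₀, i₀, π₀, hP₁, hP₀, hres⟩ := hG
  have := h.epi
  have : Projective (pullback π₀ q) := projective_of_isSes (hres.pullback_snd q)
  obtain ⟨τ, hτ⟩ := hP₀.factors (𝟙 P₀) (pullback.fst π₀ q)
  obtain ⟨ρ, hρ⟩ := (h.pullback_fst π₀).exists_retraction_of_section hτ
  exact Retract.projective ⟨_, ρ, hρ⟩

lemma of_isSes {P G Z : A} {i : P ⟶ G} {p : G ⟶ Z} (h : IsSes i p) [Projective P]
    (hZ : PdLeOne Z) : PdLeOne G := by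
  obtain ⟨Z₁, Z₀, z₁, z₀, hZ₁, hZ₀, hres⟩ := hZ
  have := hres.epi
  exact ⟨Z₁, _, _, _, hZ₁, projective_of_isSes (h.pullback_snd z₀), hres.pullback_fst p⟩

lemma of_retract [EnoughProjectives A] {G X : A} (hG : PdLeOne G) (s : X ⟶ G) (r : G ⟶ X)
    (hsr : s ≫ r = 𝟙 X) : PdLeOne X := by
  set π := Projective.π X
  set ε := Projective.π G
  set d : Projective.over X ⊞ Projective.over G ⟶ G := biprod.desc (π ≫ s) ε
  have : Epi d := epi_of_epi_fac (biprod.inr_desc _ _)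
  have : Projective (kernel d) := hG.projective_syzygy (isSes_kernel d)
  obtain ⟨δ, hδ⟩ := Projective.factors (ε ≫ r) π
  -- `N := kernel π` is a retract of the projective `kernel d` via `(n, 0)` and `(a, b) ↦ a + δ b`
  set w := kernel.ι d ≫ biprod.desc (𝟙 _) δ
  have hw : w ≫ π = 0 := by
    have : biprod.desc (𝟙 _) δ ≫ π = d ≫ r := by ext <;> simp [d, hδ, hsr]
    rw [assoc, this, kernel.condition_assoc, zero_comp]
  have hν : (kernel.ι π ≫ biprod.inl) ≫ d = 0 := by simp [d]
  have hret : kernel.lift d _ hν ≫ kernel.lift π w hw = 𝟙 _ := by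
    ext
    simp [w]
  exact ⟨_, _, _, π, Retract.projective ⟨_, _, hret⟩, inferInstance, isSes_kernel π⟩

end PdLeOne

namespace IsTorsionPair

variable {T F : Set A}

lemma mem_torsion_iff (htf : IsTorsionPair T F) {X : A} : X ∈ T ↔ ∀ Y ∈ F, ∀ f : X ⟶ Y, f = 0 := by
  refine ⟨fun hX Y hY f => htf.hom_zero hX hY f, fun h => ?_⟩
  obtain ⟨tX, fX, i, p, htX, hfX, hses⟩ := htf.seq X
  have := hses.epi
  have := hses.isIso_of_isZero_right (.of_epi_eq_zero p (h fX hfX p))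
  exact htf.isoClosed_torsion (asIso i) htX

lemma mem_torsionFree_iff (htf : IsTorsionPair T F) {Y : A} : Y ∈ F ↔ ∀ X ∈ T, ∀ f : X ⟶ Y, f = 0 := by
  refine ⟨fun hY X hX f => htf.hom_zero hX hY f, fun h => ?_⟩
  obtain ⟨tY, fY, i, p, htY, hfY, hses⟩ := htf.seq Y
  have := hses.mono
  have := hses.isIso_of_isZero_left (.of_mono_eq_zero i (h tY htY i))
  exact htf.isoClosed_torsionFree (asIso p).symm hfY

lemma mem_torsion_of_epi (htf : IsTorsionPair T F) {X Q : A} (hX : X ∈ T) (g : X ⟶ Q) [Epi g] : Q ∈ T :=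
  htf.mem_torsion_iff.2 fun Y hY f =>
    (cancel_epi g).1 (by rw [htf.hom_zero hX hY (g ≫ f), comp_zero])

lemma mem_torsion_of_isSes (htf : IsTorsionPair T F) {X E B : A} {a : X ⟶ E} {b : E ⟶ B} (hses : IsSes a b) (hX : X ∈ T)
    (hB : B ∈ T) : E ∈ T := htf.mem_torsion_iff.2 fun Y hY f => by
  obtain ⟨l, hl⟩ := hses.exists_desc f (htf.hom_zero hX hY _)
  rw [← hl, htf.hom_zero hB hY l, comp_zero]

end IsTorsionPair

section Fac

variable {T : Set A}

omit [Abelian A] in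
lemma subset_fac : T ⊆ Fac T := fun X hX => ⟨X, hX, 𝟙 X, inferInstance⟩

omit [Abelian A] in
lemma mem_fac_of_iso {X Y : A} (e : X ≅ Y) (hX : X ∈ Fac T) : Y ∈ Fac T := by
  obtain ⟨T', hT', q, hq⟩ := hX
  exact ⟨T', hT', q ≫ e.hom, epi_comp q e.hom⟩

lemma mem_rightHomPerp_of_iso {X Y : A} (e : X ≅ Y) (hX : X ∈ rightHomPerp T) :
    Y ∈ rightHomPerp T := fun Z hZ f => by
  simpa using congrArg (· ≫ e.hom) (hX Z hZ (f ≫ e.inv))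

lemma hom_eq_zero_of_fac_of_rightHomPerp {X Y : A} (hX : X ∈ Fac T) (hY : Y ∈ rightHomPerp T)
    (f : X ⟶ Y) : f = 0 := by
  obtain ⟨T', hT', q, hq⟩ := hX
  exact (cancel_epi q).1 (by rw [hY T' hT' (q ≫ f), comp_zero])

lemma ext1Zero_of_mem_fac {X Y : A} (hX : X ∈ leftExt1Perp T) (hpd : PdLeOne X)
    (hY : Y ∈ Fac T) : Ext1Zero X Y := by
  obtain ⟨T', hT', q, hq⟩ := hY
  exact Ext1Zero.of_epi_of_pdLeOne hpd (hX T' hT') q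

end Fac

/-- Pulling back `D ↠ Q` along `K → Q` gives the extension `E` of `K`; a lift `K → D` splits it. -/
lemma exists_retraction_of_lift {Z E K D Q : A} {i : Z ⟶ E} {p : E ⟶ K} (hip : i ≫ p = 0)
    {u : E ⟶ D} {π : D ⟶ Q} (hs : IsSes (i ≫ u) π) (g : K ⟶ D) (hg : u ≫ π = p ≫ g ≫ π) :
    ∃ r : E ⟶ Z, i ≫ r = 𝟙 Z := by
  obtain ⟨r, hr⟩ := hs.exists_lift (u - p ≫ g) (by rw [Preadditive.sub_comp, assoc, hg, sub_self])
  have := hs.mono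
  refine ⟨r, (cancel_mono (i ≫ u)).1 ?_⟩
  rw [assoc, hr, Preadditive.comp_sub, reassoc_of% hip, zero_comp, sub_zero, id_comp]

namespace IsCotorsionPair

variable {C T F : Set A}

lemma ext1Zero (hct : IsCotorsionPair C T) {X Y : A} (hX : X ∈ C) (hY : Y ∈ T) :
    Ext1Zero X Y := by
  rw [hct.left_eq] at hX
  exact hX Y hY

lemma mem_left_iff (hct : IsCotorsionPair C T) {X : A} : X ∈ C ↔ ∀ Y ∈ T, Ext1Zero X Y := by
  rw [hct.left_eq]
  rfl

lemma mem_left_of_isSes (hct : IsCotorsionPair C T) {X E B : A} {a : X ⟶ E} {b : E ⟶ B}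
    (hses : IsSes a b) (hX : X ∈ C) (hB : B ∈ C) : E ∈ C :=
  hct.mem_left_iff.2 fun _ hY => Ext1Zero.of_isSes hses (hct.ext1Zero hX hY) (hct.ext1Zero hB hY)

lemma exists_isRightApprox_inter (hct : IsCotorsionPair C T) (htf : IsTorsionPair T F) (E : A) :
    ∃ (X : A) (φ : X ⟶ E), IsRightApprox (C ∩ T) φ := by
  obtain ⟨tE, fE, iE, pE, htE, hfE, hsesE⟩ := htf.seq E
  obtain ⟨t', c, a, b, ht', hc, hses⟩ := hct.seq₁ tE
  refine ⟨c, b ≫ iE, ⟨hc, htf.mem_torsion_of_isSes hses ht' htE⟩, fun W hW ψ => ?_⟩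
  obtain ⟨ψ', hψ'⟩ := hsesE.exists_lift ψ (htf.hom_zero hW.2 hfE _)
  obtain ⟨g, hg⟩ := hses.exists_lift_of_ext1Zero (hct.ext1Zero hW.1 ht') ψ'
  exact ⟨g, by rw [← assoc, hg, hψ']⟩

lemma eq_fac_inter (hct : IsCotorsionPair C T) (htf : IsTorsionPair T F) : T = Fac (C ∩ T) := by
  ext Y
  refine ⟨fun hY => ?_, fun ⟨W, hW, p, _⟩ => htf.mem_torsion_of_epi hW.2 p⟩
  obtain ⟨t, c, i, p, ht, hc, hses⟩ := hct.seq₁ Y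
  exact ⟨c, ⟨hc, htf.mem_torsion_of_isSes hses ht hY⟩, p, hses.epi⟩

lemma eq_rightHomPerp_inter (hct : IsCotorsionPair C T) (htf : IsTorsionPair T F) :
    F = rightHomPerp (C ∩ T) := by
  ext Y
  refine ⟨fun hY W hW f => htf.hom_zero hW.2 hY f, fun hY => htf.mem_torsionFree_iff.2 ?_⟩
  intro X hX
  rw [hct.eq_fac_inter htf] at hX
  exact hom_eq_zero_of_fac_of_rightHomPerp hX hY

variable [EnoughProjectives A]

lemma pdLeOne_of_mem_left (hct : IsCotorsionPair C T) (htf : IsTorsionPair T F) {X : A}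
    (hX : X ∈ C) : PdLeOne X := by
  set ρ := Projective.π X
  have hK := isSes_kernel ρ
  refine ⟨_, _, _, ρ, projective_of_ext1Zero fun Z E i p hE => ?_, inferInstance, hK⟩
  obtain ⟨D, _, u, _, hD, _, hu⟩ := hct.seq₂ E
  have := hE.mono
  have := hu.mono
  have hQ : cokernel (i ≫ u) ∈ T := htf.mem_torsion_of_epi hD (cokernel.π _)
  obtain ⟨m, hm⟩ := hE.exists_desc (u ≫ cokernel.π (i ≫ u)) (by rw [← assoc, cokernel.condition])
  obtain ⟨M, hM⟩ := hK.exists_extend_of_ext1Zero (hct.ext1Zero hX hQ) m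
  obtain ⟨G, hG⟩ := Projective.factors M (cokernel.π (i ≫ u))
  obtain ⟨r, hr⟩ := exists_retraction_of_lift hE.w (isSes_cokernel (i ≫ u)) (kernel.ι ρ ≫ G)
    (by rw [← hm, assoc, hG, hM])
  exact hE.exists_section_of_retraction hr

lemma isTilting_inter (hct : IsCotorsionPair C T) (htf : IsTorsionPair T F) :
    IsTilting (C ∩ T) where
  sum_mem hX hY := ⟨hct.mem_left_of_isSes (isSes_biprod _ _) hX.1 hY.1,
    htf.mem_torsion_of_isSes (isSes_biprod _ _) hX.2 hY.2⟩
  summand_mem := by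
    rintro X Y hX ⟨s, r, hsr⟩
    have : IsSplitEpi r := ⟨⟨s, hsr⟩⟩
    exact ⟨hct.mem_left_iff.2 fun Z hZ => (hct.ext1Zero hX.1 hZ).of_retract s r hsr,
      htf.mem_torsion_of_epi hX.2 r⟩
  ext1_zero hX hY := hct.ext1Zero hX.1 hY.2
  pd_le_one X hX := hct.pdLeOne_of_mem_left htf hX.1
  coresolution P _ := by
    obtain ⟨D, D', i, p, hD, hD', hses⟩ := hct.seq₂ P
    have := hses.epi
    have hP : P ∈ C := hct.mem_left_iff.2 fun _ _ => ext1Zero_of_projective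
    exact ⟨D, D', i, p, ⟨hct.mem_left_of_isSes hses hP hD', hD⟩,
      ⟨hD', htf.mem_torsion_of_epi hD p⟩, hses⟩
  contravariantly_finite := hct.exists_isRightApprox_inter htf

lemma eq_left_inter (hct : IsCotorsionPair C T) (htf : IsTorsionPair T F) :
    C = {X : A | X ∈ leftExt1Perp (C ∩ T) ∧ PdLeOne X} := by
  ext X
  refine ⟨fun hX => ⟨fun W hW => hct.ext1Zero hX hW.2, hct.pdLeOne_of_mem_left htf hX⟩,
    fun ⟨hperp, hpd⟩ => hct.mem_left_iff.2 fun Y hY => ?_⟩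
  rw [hct.eq_fac_inter htf] at hY
  exact ext1Zero_of_mem_fac hperp hpd hY

end IsCotorsionPair

section Tilting

variable {T : Set A}

lemma IsWeakTilting.mem_leftExt1Perp (ht : IsWeakTilting T) {X : A} (hX : X ∈ T) :
    X ∈ leftExt1Perp T := fun _ hY => ht.ext1_zero hX hY

omit [Abelian A] in
lemma IsRightApprox.epi_of_mem_fac {X E : A} {φ : X ⟶ E} (hφ : IsRightApprox T φ)
    (hE : E ∈ Fac T) : Epi φ := by
  obtain ⟨T', hT', q, hq⟩ := hE
  obtain ⟨g, hg⟩ := hφ.2 T' hT' q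
  exact epi_of_epi_fac hg

/-- The image of a right `T`-approximation is the torsion part. -/
lemma IsTilting.exists_torsion_seq (ht : IsTilting T) (E : A) :
    ∃ (tE fE : A) (i : tE ⟶ E) (p : E ⟶ fE), tE ∈ Fac T ∧ fE ∈ rightHomPerp T ∧ IsSes i p := by
  obtain ⟨X₀, φ, hX₀, happrox⟩ := ht.contravariantly_finite E
  have hImage : Abelian.image φ ∈ Fac T := ⟨X₀, hX₀, Abelian.factorThruImage φ, inferInstance⟩
  have hses : IsSes (Abelian.image.ι φ) (cokernel.π φ) := isSes_kernel (cokernel.π φ)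
  refine ⟨_, _, _, _, hImage, fun Y hY f => ?_, hses⟩
  obtain ⟨g, rfl⟩ := hses.exists_lift_of_ext1Zero
    (ext1Zero_of_mem_fac (ht.mem_leftExt1Perp hY) (ht.pd_le_one Y hY) hImage) f
  obtain ⟨h, rfl⟩ := happrox Y hY g
  rw [assoc, cokernel.condition, comp_zero]

lemma IsTilting.isTorsionPair (ht : IsTilting T) : IsTorsionPair (Fac T) (rightHomPerp T) where
  isoClosed_torsion := mem_fac_of_iso
  isoClosed_torsionFree := mem_rightHomPerp_of_iso
  hom_zero := hom_eq_zero_of_fac_of_rightHomPerp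
  seq := ht.exists_torsion_seq

variable [EnoughProjectives A]

/-- An epimorphism `P ↠ F₀` from a projective factors through the `T`-coresolution `P ↪ T₀`,
hence through a map `T₀ → F₀`, which vanishes. -/
lemma IsWeakTilting.isZero_of_ext1Zero (ht : IsWeakTilting T) {F₀ : A}
    (hperp : F₀ ∈ rightHomPerp T) (hext : ∀ Y ∈ T, Ext1Zero Y F₀) : IsZero F₀ := by
  obtain ⟨T₀, T₁, a, b, hT₀, hT₁, hcor⟩ := ht.coresolution _ (Projective.projective_over F₀)
  obtain ⟨g, hg⟩ := hcor.exists_extend_of_ext1Zero (hext T₁ hT₁) (Projective.π F₀)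
  exact .of_epi_eq_zero (Projective.π F₀) (by rw [← hg, hperp T₀ hT₀ g, comp_zero])

lemma IsWeakTilting.exists_isSes_fac (ht : IsWeakTilting T) (K : A) :
    ∃ (Y T₁ : A) (i : K ⟶ Y) (p : Y ⟶ T₁), Y ∈ Fac T ∧ T₁ ∈ T ∧ IsSes i p := by
  obtain ⟨T₀, T₁, a, b, hT₀, hT₁, hcor⟩ := ht.coresolution _ (Projective.projective_over K)
  exact ⟨_, T₁, _, _, ⟨T₀, hT₀, pushout.inr (Projective.π K) a, inferInstance⟩, hT₁,
    hcor.pushout_inl (Projective.π K)⟩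

lemma IsWeakTilting.exists_isSes_left (ht : IsWeakTilting T) (X : A) :
    ∃ (dX cX : A) (i : dX ⟶ cX) (p : cX ⟶ X),
      dX ∈ Fac T ∧ (cX ∈ leftExt1Perp T ∧ PdLeOne cX) ∧ IsSes i p := by
  have hK := isSes_kernel (Projective.π X)
  obtain ⟨Y, T₁, f, g, hY, hT₁, hsesY⟩ := ht.exists_isSes_fac (kernel (Projective.π X))
  have hcX := hsesY.pushout_inr (kernel.ι (Projective.π X))
  exact ⟨Y, _, _, _, hY, ⟨fun Z hZ => .of_isSes hcX ext1Zero_of_projective (ht.ext1_zero hT₁ hZ),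
    .of_isSes hcX (ht.pd_le_one T₁ hT₁)⟩, hK.pushout_inl f⟩

lemma IsWeakTilting.left_eq (ht : IsWeakTilting T) :
    {X : A | X ∈ leftExt1Perp T ∧ PdLeOne X} = {X : A | ∀ Y ∈ Fac T, Ext1Zero X Y} := by
  ext X
  refine ⟨fun hX Y hY => ext1Zero_of_mem_fac hX.1 hX.2 hY, fun hX => ⟨fun Y hY => hX Y
    (subset_fac hY), ?_⟩⟩
  obtain ⟨dX, cX, i, p, hdX, hcX, hses⟩ := ht.exists_isSes_left X
  obtain ⟨s, hs⟩ := hX dX hdX _ _ hses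
  exact hcX.2.of_retract s p hs

lemma IsTilting.mem_fac_of_ext1Zero (ht : IsTilting T) {Y : A} (hY : ∀ Z ∈ T, Ext1Zero Z Y) :
    Y ∈ Fac T := by
  obtain ⟨tY, fY, i, p, htY, hfY, hses⟩ := ht.exists_torsion_seq Y
  have := hses.epi
  have := hses.isIso_of_isZero_right <| ht.isZero_of_ext1Zero hfY fun Z hZ =>
    .of_epi_of_pdLeOne (ht.pd_le_one Z hZ) (hY Z hZ) p
  exact mem_fac_of_iso (asIso i) htY

lemma IsTilting.right_eq (ht : IsTilting T) :
    Fac T = {Y : A | ∀ X ∈ {X : A | X ∈ leftExt1Perp T ∧ PdLeOne X}, Ext1Zero X Y} := by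
  ext Y
  exact ⟨fun hY X hX => ext1Zero_of_mem_fac hX.1 hX.2 hY, fun hY => ht.mem_fac_of_ext1Zero
    fun Z hZ => hY Z ⟨ht.mem_leftExt1Perp hZ, ht.pd_le_one Z hZ⟩⟩

lemma IsTilting.isCotorsionPair (ht : IsTilting T) :
    IsCotorsionPair {X : A | X ∈ leftExt1Perp T ∧ PdLeOne X} (Fac T) where
  left_eq := ht.left_eq
  right_eq := ht.right_eq
  seq₁ := ht.exists_isSes_left
  seq₂ X := by
    obtain ⟨Y, T₁, i, p, hY, hT₁, hses⟩ := ht.exists_isSes_fac X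
    exact ⟨Y, T₁, i, p, hY, ⟨ht.mem_leftExt1Perp hT₁, ht.pd_le_one T₁ hT₁⟩, hses⟩

/-- For `X` in the intersection, a right `T`-approximation `X₀ ↠ X` has kernel in `Fac T`,
so it splits. -/
lemma IsTilting.inter_eq (ht : IsTilting T) :
    {X : A | X ∈ leftExt1Perp T ∧ PdLeOne X} ∩ Fac T = T := by
  refine Set.Subset.antisymm (fun X ⟨⟨hXT, hpd⟩, hXF⟩ => ?_)
    fun X hX => ⟨⟨ht.mem_leftExt1Perp hX, ht.pd_le_one X hX⟩, subset_fac hX⟩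
  obtain ⟨X₀, φ, hφ⟩ := ht.contravariantly_finite X
  have := hφ.epi_of_mem_fac hXF
  have hses := isSes_kernel φ
  have hK : kernel φ ∈ Fac T := ht.mem_fac_of_ext1Zero fun Z hZ =>
    hses.ext1Zero_left (ht.ext1_zero hZ hφ.1) (hφ.2 Z hZ)
  obtain ⟨s, hs⟩ := ext1Zero_of_mem_fac hXT hpd hK _ _ hses
  exact ht.summand_mem hφ.1 ⟨s, φ, hs⟩

end Tilting

/-- The assignments `T ↦ ({X ∈ ^{⊥₁}T : pd X ≤ 1}, Fac T, T^⊥)` and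
`(C, T, F) ↦ C ∩ T` are mutually inverse bijections between tilting subcategories and
cotorsion torsion triples. -/
theorem statement14 [EnoughProjectives A] :
    (∀ T : Set A, IsTilting T →
      (IsCotorsionPair {X : A | X ∈ leftExt1Perp T ∧ PdLeOne X} (Fac T) ∧
       IsTorsionPair (Fac T) (rightHomPerp T)) ∧
      {X : A | X ∈ leftExt1Perp T ∧ PdLeOne X} ∩ Fac T = T) ∧
    (∀ C T F : Set A, IsCotorsionPair C T → IsTorsionPair T F →
      IsTilting (C ∩ T) ∧
      C = {X : A | X ∈ leftExt1Perp (C ∩ T) ∧ PdLeOne X} ∧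
      T = Fac (C ∩ T) ∧
      F = rightHomPerp (C ∩ T)) :=
  ⟨fun _ ht => ⟨⟨ht.isCotorsionPair, ht.isTorsionPair⟩, ht.inter_eq⟩,
    fun _ _ _ hct htf => ⟨hct.isTilting_inter htf, hct.eq_left_inter htf, hct.eq_fac_inter htf,
      hct.eq_rightHomPerp_inter htf⟩⟩

end Paper
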